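/- arXiv:1812.05081 — 2 statements merged into one kernel-verified Lean document; each statement's English description precedes it below -/
import Mathlib

section
/- Finite-dimensional bounded-real lemma (Theorem 1), time-domain form: Let A ∈ ℝ^{n×n}, B ∈ ℝ^{n×m}, C ∈ ℝ^{q×n}, D ∈ ℝ^{q×m} and γ > 0. Suppose there exists a symmetric positive definite matrix P ∈ ℝ^{n×n} such that the symmetric block matrix [[AᵀP + PA, PB, Cᵀ], [BᵀP, −γI_m, Dᵀ], [C, D, −γI_q]] is negative semidefinite. Let w : [0,∞) → ℝ^m be continuous with t ↦ |w(t)|² integrable on [0,∞), let x : [0,∞) → ℝⁿ be continuously differentiable with x(0) = 0 and x'(t) = Ax(t) + Bw(t) for all t ≥ 0, and set y(t) := Cx(t) + Dw(t); assume t ↦ |y(t)|² is integrable on [0,∞). Then ∫₀^∞ |y(t)|² dt ≤ γ² ∫₀^∞ |w(t)|² dt. -/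
open Matrix MeasureTheory

noncomputable section

/-! The quadratic form `V(t) = x(t)ᵀ P x(t)` is a storage function: evaluating the LMI at
`(x, w, γ⁻¹ y)` gives the dissipation inequality `V' ≤ γ |w|² - γ⁻¹ |y|²`. Integrating over
`[0, T]` and using `V(0) = 0 ≤ V(T)` gives `0 ≤ ∫₀^T (γ |w|² - γ⁻¹ |y|²)`; now let `T → ∞`. -/

open Set Filter

section Calculus

variable {ι κ : Type*} [Fintype ι] [Fintype κ] {s : Set ℝ} {t : ℝ}

theorem HasDerivWithinAt.dotProduct {f g : ℝ → ι → ℝ} {f' g' : ι → ℝ}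
    (hf : HasDerivWithinAt f f' s t) (hg : HasDerivWithinAt g g' s t) :
    HasDerivWithinAt (fun τ => f τ ⬝ᵥ g τ) (f' ⬝ᵥ g t + f t ⬝ᵥ g') s t := by
  unfold _root_.dotProduct
  simp only [← Finset.sum_add_distrib]
  exact HasDerivWithinAt.fun_sum fun i _ =>
    (hasDerivWithinAt_pi.mp hf i).mul (hasDerivWithinAt_pi.mp hg i)

theorem HasDerivWithinAt.mulVec (M : Matrix κ ι ℝ) {f : ℝ → ι → ℝ} {f' : ι → ℝ}
    (hf : HasDerivWithinAt f f' s t) :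
    HasDerivWithinAt (fun τ => M *ᵥ f τ) (M *ᵥ f') s t :=
  (LinearMap.toContinuousLinearMap (Matrix.mulVecLin M)).hasFDerivAt.comp_hasDerivWithinAt t hf

end Calculus

theorem integral_Ioi_nonneg_of_hasDerivWithinAt_le {V V' g : ℝ → ℝ} {a : ℝ}
    (hV : ∀ t, a ≤ t → HasDerivWithinAt V (V' t) (Ici a) t)
    (hV'g : ∀ t, a < t → V' t ≤ g t) (hg : IntegrableOn g (Ioi a))
    (hVa : ∀ t, a ≤ t → V a ≤ V t) :
    0 ≤ ∫ t in Ioi a, g t := by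
  have hfinite : ∀ T, a ≤ T → V T - V a ≤ ∫ t in a..T, g t := fun T haT =>
    intervalIntegral.sub_le_integral_of_hasDeriv_right_of_le haT
      (fun t ht => (hV t ht.1).continuousWithinAt.mono Icc_subset_Ici_self)
      (fun t ht => (hV t ht.1.le).mono (Ioi_subset_Ici ht.1.le))
      ((integrableOn_Icc_iff_integrableOn_Ioc).mpr (hg.mono_set Ioc_subset_Ioi_self))
      (fun t ht => hV'g t ht.1)
  refine ge_of_tendsto (intervalIntegral_tendsto_integral_Ioi a hg tendsto_id) ?_
  filter_upwards [eventually_ge_atTop a] with T haT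
  change 0 ≤ ∫ t in a..T, g t
  linarith [hfinite T haT, hVa T haT]

section BoundedReal

variable {ι μ κ : Type*} [Fintype ι] [Fintype μ] [Fintype κ] [DecidableEq μ] [DecidableEq κ]
  (A : Matrix ι ι ℝ) (B : Matrix ι μ ℝ) (C : Matrix κ ι ℝ) (D : Matrix κ μ ℝ)
  (P : Matrix ι ι ℝ) (γ : ℝ)

def boundedRealMatrix : Matrix (ι ⊕ (μ ⊕ κ)) (ι ⊕ (μ ⊕ κ)) ℝ :=
  fromBlocks (Aᵀ * P + P * A) (fromCols (P * B) Cᵀ) (fromRows (Bᵀ * P) C)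
    (fromBlocks (-γ • (1 : Matrix μ μ ℝ)) Dᵀ D (-γ • (1 : Matrix κ κ ℝ)))

theorem sumElim_dotProduct_boundedRealMatrix_mulVec (ξ : ι → ℝ) (η : μ → ℝ) (z : κ → ℝ) :
    Sum.elim ξ (Sum.elim η z) ⬝ᵥ (boundedRealMatrix A B C D P γ *ᵥ Sum.elim ξ (Sum.elim η z))
      = (A *ᵥ ξ + B *ᵥ η) ⬝ᵥ (P *ᵥ ξ) + ξ ⬝ᵥ (P *ᵥ (A *ᵥ ξ + B *ᵥ η))
        + 2 * (z ⬝ᵥ (C *ᵥ ξ + D *ᵥ η)) - γ * (η ⬝ᵥ η) - γ * (z ⬝ᵥ z) := by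
  simp only [boundedRealMatrix, fromBlocks_mulVec, Sum.elim_comp_inl, Sum.elim_comp_inr,
    fromCols_mulVec_sumElim, fromRows_mulVec, sumElim_dotProduct_sumElim, add_mulVec, mulVec_add,
    dotProduct_add, add_dotProduct, ← mulVec_mulVec, dotProduct_transpose_mulVec, neg_smul,
    neg_mulVec, smul_mulVec, one_mulVec, dotProduct_neg, dotProduct_smul, smul_eq_mul]
  rw [dotProduct_comm (A *ᵥ ξ), dotProduct_comm (B *ᵥ η)]
  ring

variable {A B C D P γ}

theorem dissipation_inequality_of_boundedRealMatrix
    (hLMI : ∀ ζ, ζ ⬝ᵥ (boundedRealMatrix A B C D P γ *ᵥ ζ) ≤ 0) (ξ : ι → ℝ) (η : μ → ℝ) :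
    (A *ᵥ ξ + B *ᵥ η) ⬝ᵥ (P *ᵥ ξ) + ξ ⬝ᵥ (P *ᵥ (A *ᵥ ξ + B *ᵥ η))
      ≤ γ * (η ⬝ᵥ η) - γ⁻¹ * ((C *ᵥ ξ + D *ᵥ η) ⬝ᵥ (C *ᵥ ξ + D *ᵥ η)) := by
  have h := hLMI (Sum.elim ξ (Sum.elim η (γ⁻¹ • (C *ᵥ ξ + D *ᵥ η))))
  rw [sumElim_dotProduct_boundedRealMatrix_mulVec] at h
  have hinv : 2 * γ⁻¹ - γ * γ⁻¹ * γ⁻¹ = γ⁻¹ := by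
    rcases eq_or_ne γ 0 with rfl | hγ0
    · simp
    · field_simp; ring
  simp only [smul_dotProduct, dotProduct_smul, smul_eq_mul] at h
  linear_combination h - (C *ᵥ ξ + D *ᵥ η) ⬝ᵥ (C *ᵥ ξ + D *ᵥ η) * hinv

end BoundedReal

theorem bounded_real_lemma_time_domain_general
    (n m q : ℕ)
    (A : Matrix (Fin n) (Fin n) ℝ) (B : Matrix (Fin n) (Fin m) ℝ)
    (C : Matrix (Fin q) (Fin n) ℝ) (D : Matrix (Fin q) (Fin m) ℝ)
    (γ : ℝ) (hγ : 0 < γ)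
    (P : Matrix (Fin n) (Fin n) ℝ) (hP : P.PosDef)
    (hLMI : ∀ ζ : Fin n ⊕ (Fin m ⊕ Fin q) → ℝ,
      ζ ⬝ᵥ ((Matrix.fromBlocks
          (Aᵀ * P + P * A)
          (Matrix.fromCols (P * B) Cᵀ)
          (Matrix.fromRows (Bᵀ * P) C)
          (Matrix.fromBlocks
            (-γ • (1 : Matrix (Fin m) (Fin m) ℝ)) Dᵀ
            D (-γ • (1 : Matrix (Fin q) (Fin q) ℝ)))) *ᵥ ζ) ≤ 0)
    (w : ℝ → Fin m → ℝ)
    (hwint : IntegrableOn (fun t => w t ⬝ᵥ w t) (Set.Ioi (0:ℝ)))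
    (x : ℝ → Fin n → ℝ) (hx0 : x 0 = 0)
    (hx : ∀ t : ℝ, 0 ≤ t →
      HasDerivWithinAt x (A *ᵥ x t + B *ᵥ w t) (Set.Ici (0:ℝ)) t)
    (y : ℝ → Fin q → ℝ)
    (hy : ∀ t : ℝ, 0 ≤ t → y t = C *ᵥ x t + D *ᵥ w t)
    (hyint : IntegrableOn (fun t => y t ⬝ᵥ y t) (Set.Ioi (0:ℝ))) :
    ∫ t in Set.Ioi (0:ℝ), y t ⬝ᵥ y t ≤ γ^2 * ∫ t in Set.Ioi (0:ℝ), w t ⬝ᵥ w t := by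
  have hstorage : 0 ≤ ∫ t in Ioi 0, (γ * (w t ⬝ᵥ w t) - γ⁻¹ * (y t ⬝ᵥ y t)) :=
    integral_Ioi_nonneg_of_hasDerivWithinAt_le (V := fun t => x t ⬝ᵥ (P *ᵥ x t))
      (fun t ht => (hx t ht).dotProduct ((hx t ht).mulVec P))
      (fun t ht => by
        rw [hy t ht.le]
        exact dissipation_inequality_of_boundedRealMatrix hLMI (x t) (w t))
      ((hwint.const_mul γ).sub (hyint.const_mul γ⁻¹))
      (fun t _ => by simpa [hx0] using hP.posSemidef.dotProduct_mulVec_nonneg (x t))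
  rw [integral_sub (hwint.const_mul γ) (hyint.const_mul γ⁻¹), integral_const_mul,
    integral_const_mul, sub_nonneg] at hstorage
  calc ∫ t in Ioi 0, y t ⬝ᵥ y t = γ * (γ⁻¹ * ∫ t in Ioi 0, y t ⬝ᵥ y t) := by field_simp
    _ ≤ γ * (γ * ∫ t in Ioi 0, w t ⬝ᵥ w t) := by gcongr
    _ = γ ^ 2 * ∫ t in Ioi 0, w t ⬝ᵥ w t := by ring

theorem bounded_real_lemma_time_domain
    (n m q : ℕ)
    (A : Matrix (Fin n) (Fin n) ℝ) (B : Matrix (Fin n) (Fin m) ℝ)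
    (C : Matrix (Fin q) (Fin n) ℝ) (D : Matrix (Fin q) (Fin m) ℝ)
    (γ : ℝ) (hγ : 0 < γ)
    (P : Matrix (Fin n) (Fin n) ℝ) (hP : P.PosDef)
    (hLMI : ∀ ζ : Fin n ⊕ (Fin m ⊕ Fin q) → ℝ,
      ζ ⬝ᵥ ((Matrix.fromBlocks
          (Aᵀ * P + P * A)
          (Matrix.fromCols (P * B) Cᵀ)
          (Matrix.fromRows (Bᵀ * P) C)
          (Matrix.fromBlocks
            (-γ • (1 : Matrix (Fin m) (Fin m) ℝ)) Dᵀ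
            D (-γ • (1 : Matrix (Fin q) (Fin q) ℝ)))) *ᵥ ζ) ≤ 0)
    (w : ℝ → Fin m → ℝ) (hw : Continuous w)
    (hwint : IntegrableOn (fun t => w t ⬝ᵥ w t) (Set.Ioi (0:ℝ)))
    (x : ℝ → Fin n → ℝ) (hx0 : x 0 = 0)
    (hx : ∀ t : ℝ, 0 ≤ t →
      HasDerivWithinAt x (A *ᵥ x t + B *ᵥ w t) (Set.Ici (0:ℝ)) t)
    (y : ℝ → Fin q → ℝ)
    (hy : ∀ t : ℝ, 0 ≤ t → y t = C *ᵥ x t + D *ᵥ w t)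
    (hyint : IntegrableOn (fun t => y t ⬝ᵥ y t) (Set.Ioi (0:ℝ))) :
    ∫ t in Set.Ioi (0:ℝ), y t ⬝ᵥ y t ≤ γ^2 * ∫ t in Set.Ioi (0:ℝ), w t ⬝ᵥ w t :=
  bounded_real_lemma_time_domain_general n m q A B C D γ hγ P hP hLMI w hwint x hx0 hx y hy hyint
end
end

section
/- Reformulation of the output operator: for every x ∈ X, C₁·col(x(0), x(L), x'(0), x'(L)) + ∫₀ᴸ (C_a(s)x(s) + C_b(s)x'(s)) ds = ∫₀ᴸ C₃(θ) x''(θ) dθ. -/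
open Matrix MeasureTheory intervalIntegral

noncomputable section

/-- The stacked boundary-value vector `col(a, b, c, d) ∈ ℝ^{4n}`. -/
def col4 {n : ℕ} (a b c d : Fin n → ℝ) : (Fin n ⊕ Fin n) ⊕ (Fin n ⊕ Fin n) → ℝ :=
  Sum.elim (Sum.elim a b) (Sum.elim c d)

/-- The `4n × 2n` matrix `K` with block rows `[I,0], [I,L·I], [0,I], [0,I]`. -/
def Kmat (n : ℕ) (L : ℝ) :
    Matrix ((Fin n ⊕ Fin n) ⊕ (Fin n ⊕ Fin n)) (Fin n ⊕ Fin n) ℝ :=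
  Matrix.fromRows
    (Matrix.fromRows (Matrix.fromCols 1 0) (Matrix.fromCols 1 (L • 1)))
    (Matrix.fromRows (Matrix.fromCols 0 1) (Matrix.fromCols 0 1))

/-- The `4n × n` block column `col(0, (L−η)I, 0, I)`. -/
def colB (n : ℕ) (L η : ℝ) :
    Matrix ((Fin n ⊕ Fin n) ⊕ (Fin n ⊕ Fin n)) (Fin n) ℝ :=
  Matrix.fromRows (Matrix.fromRows 0 ((L - η) • 1)) (Matrix.fromRows 0 1)

/-- `B_c(η) := −(B·K)⁻¹·B·col(0, (L−η)I, 0, I)`. -/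
def Bc {n : ℕ} (L : ℝ) (B : Matrix (Fin n ⊕ Fin n) ((Fin n ⊕ Fin n) ⊕ (Fin n ⊕ Fin n)) ℝ)
    (η : ℝ) : Matrix (Fin n ⊕ Fin n) (Fin n) ℝ :=
  -((B * Kmat n L)⁻¹ * (B * colB n L η))

/-- `G₁(s,η) := [I, s·I]·B_c(η) + 1_{[η,L]}(s)·(s−η)·I`. -/
def G1 {n : ℕ} (L : ℝ) (B : Matrix (Fin n ⊕ Fin n) ((Fin n ⊕ Fin n) ⊕ (Fin n ⊕ Fin n)) ℝ)
    (s η : ℝ) : Matrix (Fin n) (Fin n) ℝ :=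
  Matrix.fromCols 1 (s • 1) * Bc L B η + (if η ≤ s then s - η else 0) • 1

/-- `G₂(s,η) := [0, I]·B_c(η) + 1_{[η,L]}(s)·I`. -/
def G2 {n : ℕ} (L : ℝ) (B : Matrix (Fin n ⊕ Fin n) ((Fin n ⊕ Fin n) ⊕ (Fin n ⊕ Fin n)) ℝ)
    (s η : ℝ) : Matrix (Fin n) (Fin n) ℝ :=
  Matrix.fromCols 0 1 * Bc L B η + (if η ≤ s then (1:ℝ) else 0) • 1

/-- Membership in `X`: `x` is twice continuously differentiable on `[0,L]`, with first and
second derivative witnesses `x'` and `x''`, and satisfies the boundary conditions. -/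
structure InX {n : ℕ} (L : ℝ)
    (B : Matrix (Fin n ⊕ Fin n) ((Fin n ⊕ Fin n) ⊕ (Fin n ⊕ Fin n)) ℝ)
    (x x' x'' : ℝ → Fin n → ℝ) : Prop where
  deriv1 : ∀ s ∈ Set.Icc (0:ℝ) L, HasDerivWithinAt x (x' s) (Set.Icc (0:ℝ) L) s
  deriv2 : ∀ s ∈ Set.Icc (0:ℝ) L, HasDerivWithinAt x' (x'' s) (Set.Icc (0:ℝ) L) s
  cont : ContinuousOn x'' (Set.Icc (0:ℝ) L)
  bc : B *ᵥ col4 (x 0) (x L) (x' 0) (x' L) = 0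


attribute [local instance] Matrix.normedAddCommGroup Matrix.normedSpace

/-- `C₃(θ) := C₁·(K·B_c(θ) + col(0,(L−θ)I,0,I)) + ∫₀ᴸ (C_a(s)G₁(s,θ) + C_b(s)G₂(s,θ)) ds`. -/
def C3 {n q : ℕ} (L : ℝ)
    (B : Matrix (Fin n ⊕ Fin n) ((Fin n ⊕ Fin n) ⊕ (Fin n ⊕ Fin n)) ℝ)
    (C1 : Matrix (Fin q) ((Fin n ⊕ Fin n) ⊕ (Fin n ⊕ Fin n)) ℝ)
    (Ca Cb : ℝ → Matrix (Fin q) (Fin n) ℝ) (θ : ℝ) : Matrix (Fin q) (Fin n) ℝ :=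
  C1 * (Kmat n L * Bc L B θ + colB n L θ)
    + ∫ s in (0:ℝ)..L, (Ca s * G1 L B s θ + Cb s * G2 L B s θ)

/-!
Taylor's formula gives `x(s) = x(0) + s x'(0) + ∫₀ˢ (s - θ) x''(θ) dθ` and
`x'(s) = x'(0) + ∫₀ˢ x''(θ) dθ`; at `s = L` this says that the boundary vector is
`K (x(0), x'(0)) + ∫₀ᴸ col(0, (L - θ)I, 0, I) x''(θ) dθ`. Since `B K` is invertible, the
boundary condition then forces `(x(0), x'(0)) = ∫₀ᴸ B_c(θ) x''(θ) dθ`. Substituting this back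
expresses `x(s)`, `x'(s)` and the boundary vector as integrals of `G₁(s, ·) x''`, `G₂(s, ·) x''`
and `(K B_c + col(0, (L - θ)I, 0, I)) x''`, and Fubini's theorem exchanges the two integrals in
the distributed term.
-/

/-- `Integrable` needs an `ENormedAddMonoid`, which Lean does not find through the local
instance `Matrix.normedAddCommGroup`. -/
instance Matrix.instENormedAddMonoidReal {l m : Type*} [Fintype l] [Fintype m] :
    ENormedAddMonoid (Matrix l m ℝ) :=
  (@NormedAddCommGroup.toENormedAddCommMonoid _ Matrix.normedAddCommGroup).toENormedAddMonoid

open Set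

section MatrixCalculus

variable {α : Type*} [TopologicalSpace α] {S : Set α} {k l m : Type*}

theorem ContinuousOn.matrix_mulVec [Fintype m] {A : α → Matrix l m ℝ} {v : α → m → ℝ}
    (hA : ContinuousOn A S) (hv : ContinuousOn v S) : ContinuousOn (fun t => A t *ᵥ v t) S :=
  (continuous_fst.matrix_mulVec continuous_snd).comp_continuousOn (hA.prodMk hv)

theorem ContinuousOn.matrix_mul [Fintype l] {A : α → Matrix k l ℝ} {M : α → Matrix l m ℝ}
    (hA : ContinuousOn A S) (hM : ContinuousOn M S) : ContinuousOn (fun t => A t * M t) S :=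
  (continuous_fst.matrix_mul continuous_snd).comp_continuousOn (hA.prodMk hM)

variable [Fintype l] [Fintype m] {a b : ℝ}

theorem Matrix.mulVec_intervalIntegral (A : Matrix l m ℝ) {f : ℝ → m → ℝ}
    (hf : IntervalIntegrable f volume a b) :
    A *ᵥ ∫ t in a..b, f t = ∫ t in a..b, A *ᵥ f t :=
  ((Matrix.mulVecLin A).toContinuousLinearMap.intervalIntegral_comp_comm hf).symm

theorem IntervalIntegrable.const_mulVec (A : Matrix l m ℝ) {f : ℝ → m → ℝ}
    (hf : IntervalIntegrable f volume a b) :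
    IntervalIntegrable (fun t => A *ᵥ f t) volume a b :=
  ⟨(Matrix.mulVecLin A).toContinuousLinearMap.integrable_comp hf.1,
    (Matrix.mulVecLin A).toContinuousLinearMap.integrable_comp hf.2⟩

theorem Matrix.intervalIntegral_mulVec {M : ℝ → Matrix l m ℝ}
    (hM : IntervalIntegrable M volume a b) (v : m → ℝ) :
    (∫ t in a..b, M t) *ᵥ v = ∫ t in a..b, M t *ᵥ v :=
  (((Matrix.mulVecBilin ℝ ℝ).flip v).toContinuousLinearMap.intervalIntegral_comp_comm hM).symm

end MatrixCalculus

section IntervalIntegral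

variable {E : Type*} [NormedAddCommGroup E] {a b c d s t : ℝ} {f f' f'' : ℝ → E}

theorem IntervalIntegrable.ite {p : ℝ → Prop} [DecidablePred p]
    (hf : IntervalIntegrable f volume a b) (hp : MeasurableSet {t | p t}) :
    IntervalIntegrable (fun t => if p t then f t else 0) volume a b := by
  have h : (fun t => if p t then f t else 0) = {t | p t}.indicator f := by
    ext t
    simp [indicator_apply]
  rw [h]
  exact ⟨hf.1.indicator hp, hf.2.indicator hp⟩

theorem intervalIntegral.integral_ite_le [NormedSpace ℝ E] (hs : s ∈ Icc a b) :
    ∫ t in a..b, (if t ≤ s then f t else 0) = ∫ t in a..s, f t := by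
  have h : (fun t => if t ≤ s then f t else 0) = {t | t ≤ s}.indicator f := by
    ext t
    simp [indicator_apply]
  rw [h, intervalIntegral.integral_indicator hs]

theorem integral_eq_sub_of_hasDerivWithinAt_Icc [NormedSpace ℝ E] [CompleteSpace E]
    (hf : ∀ t ∈ Icc a b, HasDerivWithinAt f (f' t) (Icc a b) t)
    (hf' : ContinuousOn f' (Icc a b)) (hs : s ∈ Icc a b) :
    ∫ t in a..s, f' t = f s - f a := by
  have hsub : Icc a s ⊆ Icc a b := Icc_subset_Icc_right hs.2
  refine intervalIntegral.integral_eq_sub_of_hasDerivAt_of_le hs.1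
    (fun t ht => (hf t (hsub ht)).continuousWithinAt.mono hsub) (fun t ht => ?_)
    ((hf'.mono hsub).intervalIntegrable_of_Icc hs.1)
  exact (hf t (hsub (Ioo_subset_Icc_self ht))).hasDerivAt
    (Icc_mem_nhds ht.1 (ht.2.trans_le hs.2))

theorem HasDerivWithinAt.sumElim {ι κ F : Type*} [Fintype ι] [Fintype κ]
    [NormedAddCommGroup F] [NormedSpace ℝ F] {f : ℝ → ι → F} {g : ℝ → κ → F}
    {f₀ : ι → F} {g₀ : κ → F} {S : Set ℝ}
    (hf : HasDerivWithinAt f f₀ S t) (hg : HasDerivWithinAt g g₀ S t) :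
    HasDerivWithinAt (fun t => Sum.elim (f t) (g t)) (Sum.elim f₀ g₀) S t :=
  hasDerivWithinAt_pi.2 fun
    | .inl i => hasDerivWithinAt_pi.1 hf i
    | .inr i => hasDerivWithinAt_pi.1 hg i

theorem HasDerivWithinAt.add_sub_smul [NormedSpace ℝ E] {S : Set ℝ}
    (hf : HasDerivWithinAt f (f' t) S t) (hf' : HasDerivWithinAt f' (f'' t) S t) (c : ℝ) :
    HasDerivWithinAt (fun t => f t + (c - t) • f' t) ((c - t) • f'' t) S t := by
  refine (hf.add (((hasDerivWithinAt_id t S).const_sub c).smul hf')).congr_deriv ?_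
  simp only [id, neg_smul, one_smul]
  abel

theorem integral_sub_smul_eq_of_hasDerivWithinAt_Icc [NormedSpace ℝ E] [CompleteSpace E]
    (hf : ∀ t ∈ Icc a b, HasDerivWithinAt f (f' t) (Icc a b) t)
    (hf' : ∀ t ∈ Icc a b, HasDerivWithinAt f' (f'' t) (Icc a b) t)
    (hf'' : ContinuousOn f'' (Icc a b)) (hs : s ∈ Icc a b) :
    ∫ t in a..s, (s - t) • f'' t = f s - f a - (s - a) • f' a := by
  rw [integral_eq_sub_of_hasDerivWithinAt_Icc (fun t ht => (hf t ht).add_sub_smul (hf' t ht) s)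
    ((continuousOn_const.sub continuousOn_id).smul hf'') hs]
  simp only [sub_self, zero_smul, add_zero]
  abel

theorem intervalIntegral_integral_swap [NormedSpace ℝ E] {f : ℝ → ℝ → E}
    (hab : a ≤ b) (hcd : c ≤ d)
    (hf : Integrable (Function.uncurry f)
      ((volume.restrict (Ioc a b)).prod (volume.restrict (Ioc c d)))) :
    ∫ x in a..b, ∫ y in c..d, f x y = ∫ y in c..d, ∫ x in a..b, f x y := by
  simp only [intervalIntegral.integral_of_le hab, intervalIntegral.integral_of_le hcd]
  exact integral_integral_swap hf

theorem ContinuousOn.integrable_prod_restrict_Ioc {F : ℝ × ℝ → E}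
    (hF : ContinuousOn F (Icc a b ×ˢ Icc c d)) :
    Integrable F ((volume.restrict (Ioc a b)).prod (volume.restrict (Ioc c d))) := by
  rw [Measure.prod_restrict, ← Measure.volume_eq_prod]
  exact (hF.integrableOn_compact (isCompact_Icc.prod isCompact_Icc)).mono_set
    (prod_mono Ioc_subset_Icc_self Ioc_subset_Icc_self)

end IntervalIntegral

section BoundaryValueProblem

variable {n : ℕ} {L s θ : ℝ}
  {B : Matrix (Fin n ⊕ Fin n) ((Fin n ⊕ Fin n) ⊕ (Fin n ⊕ Fin n)) ℝ}

theorem colB_mulVec (v : Fin n → ℝ) : colB n L θ *ᵥ v = col4 0 ((L - θ) • v) 0 v := by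
  simp [colB, col4, smul_mulVec]

theorem Kmat_mulVec (u v : Fin n → ℝ) :
    Kmat n L *ᵥ Sum.elim u v = col4 u (u + L • v) v v := by
  simp [Kmat, col4, fromBlocks_mulVec, smul_mulVec]

theorem fromCols_one_smul_one_mulVec (u v : Fin n → ℝ) :
    fromCols (1 : Matrix (Fin n) (Fin n) ℝ) (s • 1) *ᵥ Sum.elim u v = u + s • v := by
  simp [fromCols_mulVec, smul_mulVec]

theorem fromCols_zero_one_mulVec (u v : Fin n → ℝ) :
    fromCols (0 : Matrix (Fin n) (Fin n) ℝ) 1 *ᵥ Sum.elim u v = v := by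
  simp [fromCols_mulVec]

theorem continuous_colB : Continuous (colB n L) := by
  refine continuous_matrix ?_
  rintro ((i | i) | (i | i)) j <;> simp only [colB, fromRows_apply_inl, fromRows_apply_inr,
    Matrix.smul_apply, Matrix.zero_apply, smul_eq_mul] <;> fun_prop

theorem continuous_Bc : Continuous (Bc L B) :=
  (continuous_const.matrix_mul (continuous_const.matrix_mul continuous_colB)).neg

theorem continuous_G1 : Continuous fun p : ℝ × ℝ => G1 L B p.1 p.2 := by
  have hP : Continuous fun s : ℝ =>
      fromCols (1 : Matrix (Fin n) (Fin n) ℝ) (s • (1 : Matrix (Fin n) (Fin n) ℝ)) := by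
    refine continuous_matrix ?_
    rintro i (j | j) <;> simp only [fromCols_apply_inl, fromCols_apply_inr, Matrix.smul_apply,
      smul_eq_mul] <;> fun_prop
  have hramp (s θ : ℝ) : (if θ ≤ s then s - θ else 0) = max (s - θ) 0 := by
    split_ifs with h
    · simp [h]
    · simp [(not_le.1 h).le]
  simp only [G1, hramp]
  exact ((hP.comp continuous_fst).matrix_mul (continuous_Bc.comp continuous_snd)).add
    (((continuous_fst.sub continuous_snd).max continuous_const).smul continuous_const)

theorem G1_mulVec (v : Fin n → ℝ) : G1 L B s θ *ᵥ v
    = fromCols 1 (s • 1) *ᵥ (Bc L B θ *ᵥ v) + if θ ≤ s then (s - θ) • v else 0 := by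
  rw [G1, add_mulVec, smul_mulVec, one_mulVec, ite_smul, zero_smul]
  exact congrArg (· + _) (mulVec_mulVec _ _ _).symm

theorem G2_mulVec (v : Fin n → ℝ) : G2 L B s θ *ᵥ v
    = fromCols 0 1 *ᵥ (Bc L B θ *ᵥ v) + if θ ≤ s then v else 0 := by
  rw [G2, add_mulVec, smul_mulVec, one_mulVec, ite_smul, one_smul, zero_smul]
  exact congrArg (· + _) (mulVec_mulVec _ _ _).symm

end BoundaryValueProblem

section Solution

variable {n : ℕ} {L s : ℝ}
  {B : Matrix (Fin n ⊕ Fin n) ((Fin n ⊕ Fin n) ⊕ (Fin n ⊕ Fin n)) ℝ}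
  {x x' x'' : ℝ → Fin n → ℝ}

theorem intervalIntegrable_Bc_mulVec (hL : 0 ≤ L) (hx'' : ContinuousOn x'' (Icc 0 L)) :
    IntervalIntegrable (fun θ => Bc L B θ *ᵥ x'' θ) volume 0 L :=
  (continuous_Bc.continuousOn.matrix_mulVec hx'').intervalIntegrable_of_Icc hL

theorem intervalIntegrable_colB_mulVec (hL : 0 ≤ L) (hx'' : ContinuousOn x'' (Icc 0 L)) :
    IntervalIntegrable (fun θ => colB n L θ *ᵥ x'' θ) volume 0 L :=
  (continuous_colB.continuousOn.matrix_mulVec hx'').intervalIntegrable_of_Icc hL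

theorem intervalIntegrable_G1_mulVec (hL : 0 ≤ L) (hx'' : ContinuousOn x'' (Icc 0 L)) :
    IntervalIntegrable (fun θ => G1 L B s θ *ᵥ x'' θ) volume 0 L := by
  simp only [G1_mulVec]
  exact ((intervalIntegrable_Bc_mulVec hL hx'').const_mulVec _).add
    ((((continuousOn_const.sub continuousOn_id).smul hx'').intervalIntegrable_of_Icc hL).ite
      measurableSet_Iic)

theorem intervalIntegrable_G2_mulVec (hL : 0 ≤ L) (hx'' : ContinuousOn x'' (Icc 0 L)) :
    IntervalIntegrable (fun θ => G2 L B s θ *ᵥ x'' θ) volume 0 L := by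
  simp only [G2_mulVec]
  exact ((intervalIntegrable_Bc_mulVec hL hx'').const_mulVec _).add
    ((hx''.intervalIntegrable_of_Icc hL).ite measurableSet_Iic)

theorem integral_G1_mulVec (hx'' : ContinuousOn x'' (Icc 0 L)) (hs : s ∈ Icc 0 L) :
    ∫ θ in 0..L, G1 L B s θ *ᵥ x'' θ
      = fromCols 1 (s • 1) *ᵥ (∫ θ in 0..L, Bc L B θ *ᵥ x'' θ)
        + ∫ θ in 0..s, (s - θ) • x'' θ := by
  have hL : 0 ≤ L := hs.1.trans hs.2
  have hBc := intervalIntegrable_Bc_mulVec (B := B) hL hx''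
  have hramp : IntervalIntegrable (fun θ => (s - θ) • x'' θ) volume 0 L :=
    ((continuousOn_const.sub continuousOn_id).smul hx'').intervalIntegrable_of_Icc hL
  simp only [G1_mulVec]
  rw [intervalIntegral.integral_add (hBc.const_mulVec _) (hramp.ite measurableSet_Iic),
    intervalIntegral.integral_ite_le hs, Matrix.mulVec_intervalIntegral _ hBc]

theorem integral_G2_mulVec (hx'' : ContinuousOn x'' (Icc 0 L)) (hs : s ∈ Icc 0 L) :
    ∫ θ in 0..L, G2 L B s θ *ᵥ x'' θ
      = fromCols 0 1 *ᵥ (∫ θ in 0..L, Bc L B θ *ᵥ x'' θ) + ∫ θ in 0..s, x'' θ := by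
  have hL : 0 ≤ L := hs.1.trans hs.2
  have hBc := intervalIntegrable_Bc_mulVec (B := B) hL hx''
  simp only [G2_mulVec]
  rw [intervalIntegral.integral_add (hBc.const_mulVec _)
      ((hx''.intervalIntegrable_of_Icc hL).ite measurableSet_Iic),
    intervalIntegral.integral_ite_le hs, Matrix.mulVec_intervalIntegral _ hBc]

theorem col4_eq_Kmat_mulVec_add_integral (hX : InX L B x x' x'') (hL : 0 ≤ L) :
    col4 (x 0) (x L) (x' 0) (x' L)
      = Kmat n L *ᵥ Sum.elim (x 0) (x' 0) + ∫ θ in 0..L, colB n L θ *ᵥ x'' θ := by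
  -- `θ ↦ col4 (x 0) (x θ + (L - θ) x' θ) (x' 0) (x' θ)` runs from `K (x 0, x' 0)` to the
  -- boundary vector, with derivative `colB θ x'' θ`.
  have hderiv : ∀ θ ∈ Icc 0 L,
      HasDerivWithinAt (fun θ => col4 (x 0) (x θ + (L - θ) • x' θ) (x' 0) (x' θ))
        (colB n L θ *ᵥ x'' θ) (Icc 0 L) θ := fun θ hθ => by
    rw [colB_mulVec]
    exact ((hasDerivWithinAt_const _ _ _).sumElim
      ((hX.deriv1 θ hθ).add_sub_smul (hX.deriv2 θ hθ) L)).sumElim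
      ((hasDerivWithinAt_const _ _ _).sumElim (hX.deriv2 θ hθ))
  rw [integral_eq_sub_of_hasDerivWithinAt_Icc hderiv
    (continuous_colB.continuousOn.matrix_mulVec hX.cont) (right_mem_Icc.2 hL), Kmat_mulVec]
  simp

theorem sumElim_eq_integral_Bc_mulVec (hB : IsUnit (B * Kmat n L)) (hX : InX L B x x' x'')
    (hL : 0 ≤ L) : Sum.elim (x 0) (x' 0) = ∫ θ in 0..L, Bc L B θ *ᵥ x'' θ := by
  have hbc : (B * Kmat n L) *ᵥ Sum.elim (x 0) (x' 0)
      = -(B *ᵥ ∫ θ in 0..L, colB n L θ *ᵥ x'' θ) := by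
    have h := hX.bc
    rw [col4_eq_Kmat_mulVec_add_integral hX hL, mulVec_add, mulVec_mulVec] at h
    exact eq_neg_of_add_eq_zero_left h
  have hBc (θ : ℝ) :
      Bc L B θ *ᵥ x'' θ = -((B * Kmat n L)⁻¹ * B) *ᵥ (colB n L θ *ᵥ x'' θ) := by
    rw [Bc, neg_mulVec, neg_mulVec, mulVec_mulVec, Matrix.mul_assoc]
  calc Sum.elim (x 0) (x' 0)
      = (B * Kmat n L)⁻¹ *ᵥ ((B * Kmat n L) *ᵥ Sum.elim (x 0) (x' 0)) := by
        rw [mulVec_mulVec, nonsing_inv_mul _ ((isUnit_iff_isUnit_det _).1 hB), one_mulVec]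
    _ = ∫ θ in 0..L, Bc L B θ *ᵥ x'' θ := by
        rw [hbc, funext hBc,
          ← Matrix.mulVec_intervalIntegral _ (intervalIntegrable_colB_mulVec hL hX.cont),
          neg_mulVec, mulVec_neg, mulVec_mulVec]

theorem eq_integral_G1_mulVec (hB : IsUnit (B * Kmat n L)) (hX : InX L B x x' x'')
    (hs : s ∈ Icc 0 L) : x s = ∫ θ in 0..L, G1 L B s θ *ᵥ x'' θ := by
  rw [integral_G1_mulVec hX.cont hs, ← sumElim_eq_integral_Bc_mulVec hB hX (hs.1.trans hs.2),
    fromCols_one_smul_one_mulVec,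
    integral_sub_smul_eq_of_hasDerivWithinAt_Icc hX.deriv1 hX.deriv2 hX.cont hs]
  simp

theorem eq_integral_G2_mulVec (hB : IsUnit (B * Kmat n L)) (hX : InX L B x x' x'')
    (hs : s ∈ Icc 0 L) : x' s = ∫ θ in 0..L, G2 L B s θ *ᵥ x'' θ := by
  rw [integral_G2_mulVec hX.cont hs, ← sumElim_eq_integral_Bc_mulVec hB hX (hs.1.trans hs.2),
    fromCols_zero_one_mulVec, integral_eq_sub_of_hasDerivWithinAt_Icc hX.deriv2 hX.cont hs]
  simp

theorem col4_eq_integral (hB : IsUnit (B * Kmat n L)) (hX : InX L B x x' x'') (hL : 0 ≤ L) :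
    col4 (x 0) (x L) (x' 0) (x' L)
      = ∫ θ in 0..L, (Kmat n L * Bc L B θ + colB n L θ) *ᵥ x'' θ := by
  have hBc := intervalIntegrable_Bc_mulVec (B := B) hL hX.cont
  simp only [add_mulVec, ← mulVec_mulVec]
  rw [intervalIntegral.integral_add (hBc.const_mulVec _)
      (intervalIntegrable_colB_mulVec hL hX.cont),
    ← Matrix.mulVec_intervalIntegral _ hBc, ← sumElim_eq_integral_Bc_mulVec hB hX hL,
    col4_eq_Kmat_mulVec_add_integral hX hL]

end Solution

section Output

variable {n q : ℕ} {L : ℝ}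
  {B : Matrix (Fin n ⊕ Fin n) ((Fin n ⊕ Fin n) ⊕ (Fin n ⊕ Fin n)) ℝ}
  {Ca Cb : ℝ → Matrix (Fin q) (Fin n) ℝ} {x x' x'' : ℝ → Fin n → ℝ}

def outputKernel (L : ℝ)
    (B : Matrix (Fin n ⊕ Fin n) ((Fin n ⊕ Fin n) ⊕ (Fin n ⊕ Fin n)) ℝ)
    (Ca Cb : ℝ → Matrix (Fin q) (Fin n) ℝ) (s θ : ℝ) : Matrix (Fin q) (Fin n) ℝ :=
  Ca s * G1 L B s θ + Cb s * G2 L B s θ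

/-- Splits off the jump of `G₂` across the diagonal `θ = s`; the rest is continuous. The type
ascription keeps Lean from elaborating the product in `CStarMatrix`. -/
theorem outputKernel_eq (s θ : ℝ) : outputKernel L B Ca Cb s θ
    = (Ca s * G1 L B s θ + Cb s * (fromCols 0 1 * Bc L B θ : Matrix (Fin n) (Fin n) ℝ))
      + if θ ≤ s then Cb s else 0 := by
  split_ifs <;> simp [outputKernel, G2, Matrix.mul_add, add_assoc, *]

theorem intervalIntegrable_outputKernel (hL : 0 ≤ L) (hCa : ContinuousOn Ca (Icc 0 L))
    (hCb : ContinuousOn Cb (Icc 0 L)) (θ : ℝ) :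
    IntervalIntegrable (fun s => outputKernel L B Ca Cb s θ) volume 0 L := by
  simp only [outputKernel_eq]
  refine (ContinuousOn.intervalIntegrable_of_Icc hL ?_).add
    ((hCb.intervalIntegrable_of_Icc hL).ite measurableSet_Ici)
  exact (hCa.matrix_mul
    (continuous_G1.comp (continuous_id.prodMk continuous_const)).continuousOn).add
    (hCb.matrix_mul continuousOn_const)

theorem integrable_outputKernel_mulVec (hCa : ContinuousOn Ca (Icc 0 L))
    (hCb : ContinuousOn Cb (Icc 0 L)) (hx'' : ContinuousOn x'' (Icc 0 L)) :
    Integrable (Function.uncurry fun s θ => outputKernel L B Ca Cb s θ *ᵥ x'' θ)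
      ((volume.restrict (Ioc 0 L)).prod (volume.restrict (Ioc 0 L))) := by
  have hsplit : (Function.uncurry fun s θ => outputKernel L B Ca Cb s θ *ᵥ x'' θ)
      = fun p => (Ca p.1 * G1 L B p.1 p.2
          + Cb p.1 * (fromCols 0 1 * Bc L B p.2 : Matrix (Fin n) (Fin n) ℝ)) *ᵥ x'' p.2
        + {p : ℝ × ℝ | p.2 ≤ p.1}.indicator (fun p => Cb p.1 *ᵥ x'' p.2) p := by
    ext1 p
    simp only [Function.uncurry, outputKernel_eq, add_mulVec, indicator_apply, mem_ofPred_eq]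
    split_ifs <;> simp
  have hCa' := hCa.comp continuousOn_fst (mapsTo_fst_prod (t := Icc 0 L))
  have hCb' := hCb.comp continuousOn_fst (mapsTo_fst_prod (t := Icc 0 L))
  have hx''' := hx''.comp continuousOn_snd (mapsTo_snd_prod (s := Icc 0 L))
  rw [hsplit]
  refine ContinuousOn.integrable_prod_restrict_Ioc ?_ |>.add
    ((ContinuousOn.integrable_prod_restrict_Ioc (hCb'.matrix_mulVec hx''')).indicator
      (measurableSet_le measurable_snd measurable_fst))
  exact ((hCa'.matrix_mul continuous_G1.continuousOn).add (hCb'.matrix_mul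
    (continuousOn_const.matrix_mul (continuous_Bc.comp continuous_snd).continuousOn))).matrix_mulVec
    hx'''

theorem intervalIntegrable_integral_outputKernel_mulVec (hL : 0 ≤ L)
    (hCa : ContinuousOn Ca (Icc 0 L)) (hCb : ContinuousOn Cb (Icc 0 L))
    (hx'' : ContinuousOn x'' (Icc 0 L)) :
    IntervalIntegrable (fun θ => (∫ s in 0..L, outputKernel L B Ca Cb s θ) *ᵥ x'' θ)
      volume 0 L := by
  rw [intervalIntegrable_iff_integrableOn_Ioc_of_le hL]
  refine (integrable_outputKernel_mulVec (B := B) hCa hCb hx'').integral_prod_right.congr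
    (ae_of_all _ fun θ => ?_)
  show ∫ s in Ioc 0 L, outputKernel L B Ca Cb s θ *ᵥ x'' θ
    = (∫ s in 0..L, outputKernel L B Ca Cb s θ) *ᵥ x'' θ
  rw [Matrix.intervalIntegral_mulVec (intervalIntegrable_outputKernel hL hCa hCb θ),
    intervalIntegral.integral_of_le hL]

theorem integral_mulVec_add_mulVec_eq (hB : IsUnit (B * Kmat n L)) (hL : 0 ≤ L)
    (hCa : ContinuousOn Ca (Icc 0 L)) (hCb : ContinuousOn Cb (Icc 0 L))
    (hX : InX L B x x' x'') :
    ∫ s in 0..L, (Ca s *ᵥ x s + Cb s *ᵥ x' s)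
      = ∫ θ in 0..L, (∫ s in 0..L, outputKernel L B Ca Cb s θ) *ᵥ x'' θ := by
  calc ∫ s in 0..L, (Ca s *ᵥ x s + Cb s *ᵥ x' s)
      = ∫ s in 0..L, ∫ θ in 0..L, outputKernel L B Ca Cb s θ *ᵥ x'' θ := by
        refine intervalIntegral.integral_congr fun s hs => ?_
        rw [uIcc_of_le hL] at hs
        have hG1 := intervalIntegrable_G1_mulVec (B := B) (s := s) hL hX.cont
        have hG2 := intervalIntegrable_G2_mulVec (B := B) (s := s) hL hX.cont
        simp only [outputKernel, add_mulVec, ← mulVec_mulVec]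
        rw [intervalIntegral.integral_add (hG1.const_mulVec _) (hG2.const_mulVec _),
          ← Matrix.mulVec_intervalIntegral _ hG1, ← Matrix.mulVec_intervalIntegral _ hG2,
          ← eq_integral_G1_mulVec hB hX hs, ← eq_integral_G2_mulVec hB hX hs]
    _ = ∫ θ in 0..L, ∫ s in 0..L, outputKernel L B Ca Cb s θ *ᵥ x'' θ :=
        intervalIntegral_integral_swap hL hL (integrable_outputKernel_mulVec hCa hCb hX.cont)
    _ = ∫ θ in 0..L, (∫ s in 0..L, outputKernel L B Ca Cb s θ) *ᵥ x'' θ :=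
        intervalIntegral.integral_congr fun θ _ =>
          (Matrix.intervalIntegral_mulVec (intervalIntegrable_outputKernel hL hCa hCb θ) _).symm

end Output

theorem output_operator_reformulation_general
    (n q : ℕ) (L : ℝ) (hL : 0 < L)
    (B : Matrix (Fin n ⊕ Fin n) ((Fin n ⊕ Fin n) ⊕ (Fin n ⊕ Fin n)) ℝ)
    (hB : IsUnit (B * Kmat n L))
    (C1 : Matrix (Fin q) ((Fin n ⊕ Fin n) ⊕ (Fin n ⊕ Fin n)) ℝ)
    (Ca Cb : ℝ → Matrix (Fin q) (Fin n) ℝ)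
    (hCa : ContinuousOn Ca (Set.Icc (0:ℝ) L)) (hCb : ContinuousOn Cb (Set.Icc (0:ℝ) L))
    (x x' x'' : ℝ → Fin n → ℝ) (hX : InX L B x x' x'') :
    C1 *ᵥ col4 (x 0) (x L) (x' 0) (x' L)
        + ∫ s in (0:ℝ)..L, (Ca s *ᵥ x s + Cb s *ᵥ x' s)
      = ∫ θ in (0:ℝ)..L, C3 L B C1 Ca Cb θ *ᵥ x'' θ := by
  have hL0 : 0 ≤ L := hL.le
  have hbdry : IntervalIntegrable (fun θ => (Kmat n L * Bc L B θ + colB n L θ) *ᵥ x'' θ)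
      volume 0 L :=
    (((continuousOn_const.matrix_mul continuous_Bc.continuousOn).add
      continuous_colB.continuousOn).matrix_mulVec hX.cont).intervalIntegrable_of_Icc hL0
  have hC3 (θ : ℝ) : C3 L B C1 Ca Cb θ *ᵥ x'' θ
      = C1 *ᵥ ((Kmat n L * Bc L B θ + colB n L θ) *ᵥ x'' θ)
        + (∫ s in 0..L, outputKernel L B Ca Cb s θ) *ᵥ x'' θ := by
    rw [C3, add_mulVec, mulVec_mulVec]
    rfl
  rw [col4_eq_integral hB hX hL0, Matrix.mulVec_intervalIntegral _ hbdry,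
    integral_mulVec_add_mulVec_eq hB hL0 hCa hCb hX, ← intervalIntegral.integral_add
      (hbdry.const_mulVec C1)
      (intervalIntegrable_integral_outputKernel_mulVec hL0 hCa hCb hX.cont)]
  exact intervalIntegral.integral_congr fun θ _ => (hC3 θ).symm

theorem output_operator_reformulation
    (n q : ℕ) (hn : 1 ≤ n) (hq : 1 ≤ q) (L : ℝ) (hL : 0 < L)
    (B : Matrix (Fin n ⊕ Fin n) ((Fin n ⊕ Fin n) ⊕ (Fin n ⊕ Fin n)) ℝ)
    (hB : IsUnit (B * Kmat n L))
    (C1 : Matrix (Fin q) ((Fin n ⊕ Fin n) ⊕ (Fin n ⊕ Fin n)) ℝ)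
    (Ca Cb : ℝ → Matrix (Fin q) (Fin n) ℝ)
    (hCa : ContinuousOn Ca (Set.Icc (0:ℝ) L)) (hCb : ContinuousOn Cb (Set.Icc (0:ℝ) L))
    (x x' x'' : ℝ → Fin n → ℝ) (hX : InX L B x x' x'') :
    C1 *ᵥ col4 (x 0) (x L) (x' 0) (x' L)
        + ∫ s in (0:ℝ)..L, (Ca s *ᵥ x s + Cb s *ᵥ x' s)
      = ∫ θ in (0:ℝ)..L, C3 L B C1 Ca Cb θ *ᵥ x'' θ :=
  output_operator_reformulation_general n q L hL B hB C1 Ca Cb hCa hCb x x' x'' hX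
end
end
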